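/- arXiv:1203.5955 — 2 statements merged into one kernel-verified Lean document; each statement's English description precedes it below -/
import Mathlib

section
/- Let w₁, …, w_n be real numbers not all zero with min_i w_i < 0 < max_i w_i. Then the function h(λ) = (1/n) Σ_{i=1}^n w_i/(1 + λ w_i), defined on the open interval (−1/max_i w_i, −1/min_i w_i), is strictly decreasing and has a unique zero λ* in that interval, and 1 + λ* w_i > 0 for all i. -/
/-!
Each summand `w / (1 + λ w)` is decreasing in `λ` wherever its denominator is positive, since
`w / (1 + x w) - w / (1 + y w) = w² (y - x) / ((1 + x w) (1 + y w))`, and on the interval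
`(-1 / max w, -1 / min w)` all denominators are positive. For `λ ≤ 0` every summand is at least
`min (w i) 0`, while the summand attaining `max w` blows up as `λ ↓ -1 / max w`; so the sum is
positive near the left endpoint. Replacing `(w, λ)` by `(-w, -λ)` negates the sum, so it is negative
near the right endpoint, and the intermediate value theorem gives the zero, unique by monotonicity.
-/

open Finset

lemma one_add_mul_pos_of_mem_Ioo {m M x l : ℝ} (hm : m < 0) (hM : 0 < M) (hx : x ∈ Set.Icc m M)
    (hl : l ∈ Set.Ioo (-1 / M) (-1 / m)) : 0 < 1 + l * x := by
  rcases le_or_gt l 0 with hl₀ | hl₀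
  · have hlM : -1 < l * M := (div_lt_iff₀ hM).mp hl.1
    nlinarith [mul_le_mul_of_nonpos_left hx.2 hl₀]
  · have hlm : -1 < l * m := (lt_div_iff_of_neg hm).mp hl.2
    nlinarith [mul_le_mul_of_nonneg_left hx.1 hl₀.le]

lemma div_one_add_mul_lt_div_one_add_mul {w x y : ℝ} (hw : w ≠ 0) (hx : 0 < 1 + x * w)
    (hy : 0 < 1 + y * w) (hxy : x < y) : w / (1 + y * w) < w / (1 + x * w) := by
  rw [div_lt_div_iff₀ hy hx]
  nlinarith [mul_pos (sq_pos_of_ne_zero hw) (sub_pos.2 hxy)]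

lemma div_one_add_mul_le_div_one_add_mul {w x y : ℝ} (hx : 0 < 1 + x * w)
    (hy : 0 < 1 + y * w) (hxy : x ≤ y) : w / (1 + y * w) ≤ w / (1 + x * w) := by
  rw [div_le_div_iff₀ hy hx]
  nlinarith [mul_nonneg (sq_nonneg w) (sub_nonneg.2 hxy)]

lemma min_zero_le_div_one_add_mul {x l : ℝ} (hl : l ≤ 0) (h : 0 < 1 + l * x) :
    min x 0 ≤ x / (1 + l * x) := by
  rcases le_or_gt x 0 with hx | hx
  · rw [min_eq_left hx, le_div_iff₀ h]
    nlinarith [mul_nonneg (neg_nonneg.2 hl) (neg_nonneg.2 hx)]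
  · exact (min_le_right x 0).trans (div_pos hx h).le

lemma exists_mem_Ioo_lt_div_one_add_mul {M : ℝ} (hM : 0 < M) (K : ℝ) :
    ∃ l ∈ Set.Ioo (-1 / M) 0, K < M / (1 + l * M) := by
  set δ := 1 / (|K| + M + 1)
  have hδ : 0 < δ := by positivity
  refine ⟨-1 / M + δ, ⟨by linarith, ?_⟩, ?_⟩
  · have : δ < 1 / M := one_div_lt_one_div_of_lt hM (by linarith [abs_nonneg K])
    rw [neg_div]
    linarith
  · have hden : 1 + (-1 / M + δ) * M = δ * M := by field_simp; ring
    rw [hden, div_mul_cancel_right₀ hM.ne']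
    simp only [δ, one_div, inv_inv]
    linarith [le_abs_self K]

section

variable {ι : Type*} [Fintype ι] (w : ι → ℝ)

lemma strictAntiOn_sum_div_one_add_mul (hw : ∃ i, w i ≠ 0) :
    StrictAntiOn (fun l => ∑ i, w i / (1 + l * w i)) {l | ∀ i, 0 < 1 + l * w i} := by
  obtain ⟨i₀, hi₀⟩ := hw
  intro x hx y hy hxy
  exact sum_lt_sum (fun i _ => div_one_add_mul_le_div_one_add_mul (hx i) (hy i) hxy.le)
    ⟨i₀, mem_univ i₀, div_one_add_mul_lt_div_one_add_mul hi₀ (hx i₀) (hy i₀) hxy⟩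

lemma continuousOn_sum_div_one_add_mul :
    ContinuousOn (fun l => ∑ i, w i / (1 + l * w i)) {l | ∀ i, 0 < 1 + l * w i} :=
  continuousOn_finsetSum _ fun i _ => continuousOn_const.div (by fun_prop) fun _ hl => (hl i).ne'

lemma exists_mem_Ioo_sum_div_one_add_mul_pos {M : ℝ} (hM : 0 < M) (hwM : ∀ i, w i ≤ M)
    {i₀ : ι} (hi₀ : w i₀ = M) : ∃ l ∈ Set.Ioo (-1 / M) 0, 0 < ∑ i, w i / (1 + l * w i) := by
  obtain ⟨l, hl, hlarge⟩ := exists_mem_Ioo_lt_div_one_add_mul hM (-∑ i, min (w i) 0)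
  have hden : ∀ i, 0 < 1 + l * w i := fun i => by
    nlinarith [(div_lt_iff₀ hM).mp hl.1, mul_le_mul_of_nonpos_left (hwM i) hl.2.le]
  refine ⟨l, hl, ?_⟩
  have key := single_le_sum (f := fun i => w i / (1 + l * w i) - min (w i) 0)
    (fun i _ => sub_nonneg.2 (min_zero_le_div_one_add_mul hl.2.le (hden i))) (mem_univ i₀)
  simp only [hi₀, min_eq_right hM.le, sub_zero, sum_sub_distrib] at key
  linarith

lemma exists_mem_Ioo_sum_div_one_add_mul_neg {m : ℝ} (hm : m < 0) (hmw : ∀ i, m ≤ w i)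
    {j₀ : ι} (hj₀ : w j₀ = m) : ∃ l ∈ Set.Ioo 0 (-1 / m), ∑ i, w i / (1 + l * w i) < 0 := by
  obtain ⟨l, hl, hpos⟩ := exists_mem_Ioo_sum_div_one_add_mul_pos (-w) (neg_pos.2 hm)
    (fun i => neg_le_neg (hmw i)) (i₀ := j₀) (by simp [hj₀])
  refine ⟨-l, ⟨neg_pos.2 hl.2, ?_⟩, ?_⟩
  · have hl₁ := hl.1
    rw [div_neg] at hl₁
    linarith
  · simpa [neg_div, sum_neg_distrib] using hpos

end

/-- Existence and uniqueness of the empirical likelihood Lagrange multiplier: if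
`min_i w_i < 0 < max_i w_i`, then `h(λ) = (1/n) Σ w_i/(1 + λ w_i)` is strictly
decreasing on `(−1/max_i w_i, −1/min_i w_i)` and has a unique zero `λ*` there,
with `1 + λ* w_i > 0` for all `i`. -/
theorem el_lagrange_multiplier {n : ℕ} (w : Fin n → ℝ)
    (hne : (Finset.univ : Finset (Fin n)).Nonempty)
    (hmin : Finset.univ.inf' hne w < 0) (hmax : 0 < Finset.univ.sup' hne w) :
    StrictAntiOn (fun l : ℝ => (1 / (n : ℝ)) * ∑ i, w i / (1 + l * w i))
        (Set.Ioo (-1 / Finset.univ.sup' hne w) (-1 / Finset.univ.inf' hne w)) ∧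
    ∃! l : ℝ,
      l ∈ Set.Ioo (-1 / Finset.univ.sup' hne w) (-1 / Finset.univ.inf' hne w) ∧
      (1 / (n : ℝ)) * ∑ i, w i / (1 + l * w i) = 0 ∧
      ∀ i, 0 < 1 + l * w i := by
  obtain ⟨i₀, -, hi₀⟩ := exists_mem_eq_sup' hne w
  obtain ⟨j₀, -, hj₀⟩ := exists_mem_eq_inf' hne w
  have hwM : ∀ i, w i ≤ univ.sup' hne w := fun i => le_sup' w (mem_univ i)
  have hmw : ∀ i, univ.inf' hne w ≤ w i := fun i => inf'_le w (mem_univ i)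
  set I := Set.Ioo (-1 / univ.sup' hne w) (-1 / univ.inf' hne w)
  have hden : I ⊆ {l | ∀ i, 0 < 1 + l * w i} := fun l hl i =>
    one_add_mul_pos_of_mem_Ioo hmin hmax ⟨hmw i, hwM i⟩ hl
  have hanti := (strictAntiOn_sum_div_one_add_mul w ⟨i₀, hi₀ ▸ hmax.ne'⟩).mono hden
  have hn : (0 : ℝ) < 1 / n := by
    obtain ⟨k, -⟩ := hne
    exact one_div_pos.2 (Nat.cast_pos.2 k.pos)
  obtain ⟨a, ha, hSa⟩ := exists_mem_Ioo_sum_div_one_add_mul_pos w hmax hwM hi₀.symm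
  obtain ⟨b, hb, hSb⟩ := exists_mem_Ioo_sum_div_one_add_mul_neg w hmin hmw hj₀.symm
  have hab : Set.Icc a b ⊆ I := Set.Icc_subset_Ioo ha.1 hb.2
  obtain ⟨l, hl, hSl⟩ := intermediate_value_Icc' (ha.2.trans hb.1).le
    ((continuousOn_sum_div_one_add_mul w).mono (hab.trans hden)) ⟨hSb.le, hSa.le⟩
  beta_reduce at hSl
  refine ⟨fun x hx y hy hxy => mul_lt_mul_of_pos_left (hanti hx hy hxy) hn,
    l, ⟨hab hl, by rw [hSl, mul_zero], hden (hab hl)⟩, ?_⟩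
  rintro l' ⟨hl', hSl', -⟩
  refine hanti.injOn hl' (hab hl) ?_
  simp only [hSl, (mul_eq_zero.1 hSl').resolve_left hn.ne']
end

section
/- Let w₁, …, w_n be reals with min_i w_i < 0 < max_i w_i, and let λ be the unique solution of Σ_{i=1}^n w_i/(1 + λ w_i) = 0 with 1 + λ w_i > 0 for all i. Set X_i = λ w_i, W̄ = (1/n)Σ w_i, S² = (1/n)Σ w_i². Then (1/n) Σ_{i=1}^n X_i²/(1 + X_i) = λ W̄, and consequently λ² S² ≤ λ W̄ · (1 + max_{1≤j≤n} |X_j|). -/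
/-!
Writing `X = λ w`, one has `X² / (1 + X) = λ w - λ · w / (1 + λ w)`; summing, the estimating
equation `Σ w / (1 + λ w) = 0` kills the second term, which gives the identity. For the
inequality, `X² = X² / (1 + X) · (1 + X) ≤ X² / (1 + X) · (1 + max |X|)` termwise, since
`1 + X > 0`; summing and substituting the identity gives the bound.
-/

open Finset

section Identity

variable {K ι : Type*} [Field K] {s : Finset ι}

theorem sq_mul_div_one_add_mul {c x : K} (hx : 1 + c * x ≠ 0) :
    (c * x) ^ 2 / (1 + c * x) = c * x - c * (x / (1 + c * x)) := by
  field_simp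
  ring

theorem sum_sq_mul_div_one_add_mul {c : K} {w : ι → K} (hw : ∀ i ∈ s, 1 + c * w i ≠ 0)
    (hsol : ∑ i ∈ s, w i / (1 + c * w i) = 0) :
    ∑ i ∈ s, (c * w i) ^ 2 / (1 + c * w i) = c * ∑ i ∈ s, w i := by
  rw [sum_congr rfl fun i hi => sq_mul_div_one_add_mul (hw i hi), sum_sub_distrib,
    ← mul_sum, ← mul_sum, hsol, mul_zero, sub_zero]

end Identity

section Bound

variable {K ι : Type*} [Field K] [LinearOrder K] [IsStrictOrderedRing K] {s : Finset ι}

theorem sq_le_sq_div_one_add_mul {x M : K} (hx : 0 < 1 + x) (hxM : x ≤ M) :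
    x ^ 2 ≤ x ^ 2 / (1 + x) * (1 + M) :=
  calc x ^ 2 = x ^ 2 / (1 + x) * (1 + x) := (div_mul_cancel₀ _ hx.ne').symm
    _ ≤ x ^ 2 / (1 + x) * (1 + M) := by gcongr

theorem sum_sq_le_sum_sq_div_one_add_mul {x : ι → K} {M : K} (hx : ∀ i ∈ s, 0 < 1 + x i)
    (hxM : ∀ i ∈ s, x i ≤ M) :
    ∑ i ∈ s, x i ^ 2 ≤ (∑ i ∈ s, x i ^ 2 / (1 + x i)) * (1 + M) := by
  rw [sum_mul]
  exact sum_le_sum fun i hi => sq_le_sq_div_one_add_mul (hx i hi) (hxM i hi)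

end Bound

theorem el_lambda_identities_general {n : ℕ} (w : Fin n → ℝ)
    (hne : (Finset.univ : Finset (Fin n)).Nonempty)
    (lam : ℝ) (hpos : ∀ i, 0 < 1 + lam * w i)
    (hsol : ∑ i, w i / (1 + lam * w i) = 0) :
    (1 / (n : ℝ)) * ∑ i, (lam * w i) ^ 2 / (1 + lam * w i)
        = lam * ((1 / (n : ℝ)) * ∑ i, w i) ∧
    lam ^ 2 * ((1 / (n : ℝ)) * ∑ i, w i ^ 2)
        ≤ lam * ((1 / (n : ℝ)) * ∑ i, w i)
          * (1 + Finset.univ.sup' hne fun j => |lam * w j|) := by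
  set M := Finset.univ.sup' hne fun j => |lam * w j|
  have hsum := sum_sq_mul_div_one_add_mul (fun i _ => (hpos i).ne') hsol
  have hle : ∑ i, (lam * w i) ^ 2 ≤ lam * (∑ i, w i) * (1 + M) := by
    rw [← hsum]
    refine sum_sq_le_sum_sq_div_one_add_mul (fun i _ => hpos i) fun i _ => ?_
    exact (le_abs_self _).trans (le_sup' (fun j => |lam * w j|) (mem_univ i))
  have hsq : ∑ i, (lam * w i) ^ 2 = lam ^ 2 * ∑ i, w i ^ 2 := by
    simp only [mul_pow, mul_sum]
  refine ⟨by rw [hsum]; ring, ?_⟩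
  rw [hsq] at hle
  calc lam ^ 2 * ((1 / (n : ℝ)) * ∑ i, w i ^ 2)
      = (1 / (n : ℝ)) * (lam ^ 2 * ∑ i, w i ^ 2) := by ring
    _ ≤ (1 / (n : ℝ)) * (lam * (∑ i, w i) * (1 + M)) := by gcongr
    _ = lam * ((1 / (n : ℝ)) * ∑ i, w i) * (1 + M) := by ring

/-- Deterministic identities for the empirical likelihood expansion: if `λ` solves
`Σ w_i/(1 + λ w_i) = 0` with `1 + λ w_i > 0` for all `i`, and `X_i = λ w_i`,
`W̄ = (1/n)Σ w_i`, `S² = (1/n)Σ w_i²`, then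
`(1/n) Σ X_i²/(1 + X_i) = λ W̄` and `λ² S² ≤ λ W̄ (1 + max_j |X_j|)`. -/
theorem el_lambda_identities {n : ℕ} (w : Fin n → ℝ)
    (hne : (Finset.univ : Finset (Fin n)).Nonempty)
    (hmin : Finset.univ.inf' hne w < 0) (hmax : 0 < Finset.univ.sup' hne w)
    (lam : ℝ) (hpos : ∀ i, 0 < 1 + lam * w i)
    (hsol : ∑ i, w i / (1 + lam * w i) = 0) :
    (1 / (n : ℝ)) * ∑ i, (lam * w i) ^ 2 / (1 + lam * w i)
        = lam * ((1 / (n : ℝ)) * ∑ i, w i) ∧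
    lam ^ 2 * ((1 / (n : ℝ)) * ∑ i, w i ^ 2)
        ≤ lam * ((1 / (n : ℝ)) * ∑ i, w i)
          * (1 + Finset.univ.sup' hne fun j => |lam * w j|) :=
  el_lambda_identities_general w hne lam hpos hsol
end
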